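/- For every i ∈ [n] and y ∈ PE_n, the meet and join of x_i with y inside the lattice PE_n agree with the meet and join computed in NC_n: x_i ∧_PE y = x_i ∧_NC y and x_i ∨_PE y = x_i ∨_NC y. -/

import Mathlib

/-- A set partition of `[n]` (as a setoid on `Fin n`) is noncrossing. -/
def IsNoncrossing {n : ℕ} (x : Setoid (Fin n)) : Prop :=
  ∀ i j k l : Fin n, i < j → j < k → k < l → x.r i k → x.r j l → x.r i j

/-- `B` is a block of the set partition `x`. -/
def IsBlock {n : ℕ} (x : Setoid (Fin n)) (B : Set (Fin n)) : Prop :=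
  ∃ a, B = {b | x.r a b}

/-- The set partition whose unique (possibly) non-singleton block is `S`. -/
def blockSetoid {n : ℕ} (S : Set (Fin n)) : Setoid (Fin n) where
  r a b := a = b ∨ (a ∈ S ∧ b ∈ S)
  iseqv := by
    refine ⟨fun _ => Or.inl rfl, ?_, ?_⟩
    · rintro a b (rfl | ⟨h1, h2⟩)
      · exact Or.inl rfl
      · exact Or.inr ⟨h2, h1⟩
    · rintro a b c (rfl | ⟨h1, h2⟩) h
      · exact h
      · rcases h with rfl | ⟨h3, h4⟩
        · exact Or.inr ⟨h1, h2⟩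
        · exact Or.inr ⟨h1, h4⟩

/-- The element `x_i` of the left-modular chain: its unique non-singleton block is
`[i-1] ∪ {n}` (in 1-based terms), i.e. the elements with value `< i-1` or value `n-1`. -/
def xChain (n i : ℕ) : Setoid (Fin n) :=
  blockSetoid {a : Fin n | a.val + 1 < i ∨ a.val = n - 1}

/-- The noncrossing closure: the smallest noncrossing partition above `x`. -/
def ncClosure {n : ℕ} (x : Setoid (Fin n)) : Setoid (Fin n) :=
  sInf {y | IsNoncrossing y ∧ x ≤ y}

/-- The join of two noncrossing partitions in `NC_n`. -/
def joinNC {n : ℕ} (x y : Setoid (Fin n)) : Setoid (Fin n) :=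
  ncClosure (x ⊔ y)

/-- The join of a set of noncrossing partitions in `NC_n`. -/
def joinSetNC {n : ℕ} (X : Set (Setoid (Fin n))) : Setoid (Fin n) :=
  ncClosure (sSup X)

/-- Membership in `PE_n`: noncrossing, `{n-1, n}` is not a block, and it is not the case
that `{n}` is a singleton block while `1 ∼ n-1`. -/
def PEmem {n : ℕ} (x : Setoid (Fin n)) : Prop :=
  IsNoncrossing x ∧
  ¬ IsBlock x {a : Fin n | a.val = n - 2 ∨ a.val = n - 1} ∧
  ¬ (IsBlock x {a : Fin n | a.val = n - 1} ∧
      ∃ a b : Fin n, a.val = 0 ∧ b.val = n - 2 ∧ x.r a b)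

/-- `m` is the meet of `x` and `y` in the poset `PE_n`. -/
def IsMeetPE {n : ℕ} (x y m : Setoid (Fin n)) : Prop :=
  PEmem m ∧ m ≤ x ∧ m ≤ y ∧ ∀ z, PEmem z → z ≤ x → z ≤ y → z ≤ m

/-- `j` is the join of `x` and `y` in the poset `PE_n`. -/
def IsJoinPE {n : ℕ} (x y j : Setoid (Fin n)) : Prop :=
  PEmem j ∧ x ≤ j ∧ y ≤ j ∧ ∀ z, PEmem z → x ≤ z → y ≤ z → j ≤ z

/-- `x ⋖ y` in `PE_n`. -/
def CovPE {n : ℕ} (x y : Setoid (Fin n)) : Prop :=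
  PEmem x ∧ PEmem y ∧ x < y ∧ ∀ z, PEmem z → x < z → ¬ z < y

/-- The atoms of `NC_n`: partitions `a_{i,j}` with unique non-singleton block `{i, j}`. -/
def IsAtomNC {n : ℕ} (a : Setoid (Fin n)) : Prop :=
  ∃ i j : Fin n, i < j ∧ a = blockSetoid {i, j}

/-- The partial order `≼` on atoms of `NC_n` induced by the classes
`A_j = {a : a ≤ x_j and a ≰ x_{j-1}}`. -/
def atomPrec {n : ℕ} (a b : Setoid (Fin n)) : Prop :=
  ∃ i j : ℕ, 1 ≤ i ∧ i < j ∧ j ≤ n - 1 ∧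
    (a ≤ xChain n i ∧ ¬ a ≤ xChain n (i - 1)) ∧
    (b ≤ xChain n j ∧ ¬ b ≤ xChain n (j - 1))

/-- A set of atoms of `NC_n` is bounded below (BB). -/
def IsBBset {n : ℕ} (X : Set (Setoid (Fin n))) : Prop :=
  ∀ d ∈ X, ∃ a, IsAtomNC a ∧ atomPrec a d ∧ a < joinSetNC X

/-- A set of atoms of `NC_n` is NBB: no nonempty subset is bounded below. -/
def IsNBBset {n : ℕ} (X : Set (Setoid (Fin n))) : Prop :=
  ∀ Y ⊆ X, Y.Nonempty → ¬ IsBBset Y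

/-- `X` is an NBB base for the top element of `NC_n`. -/
def IsNBBBaseTop {n : ℕ} (X : Set (Setoid (Fin n))) : Prop :=
  (∀ a ∈ X, IsAtomNC a) ∧ IsNBBset X ∧ joinSetNC X = ⊤

/-- The graph `τ(X)` on vertex set `[n]` associated with a set `X` of atoms:
`i` and `j` are adjacent iff `a_{i,j} ∈ X`. -/
def atomGraph {n : ℕ} (X : Set (Setoid (Fin n))) : SimpleGraph (Fin n) where
  Adj i j := i ≠ j ∧ blockSetoid ({i, j} : Set (Fin n)) ∈ X
  symm := ⟨by
    rintro i j ⟨hne, hm⟩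
    exact ⟨hne.symm, by rwa [Set.pair_comm]⟩⟩
  loopless := ⟨fun i h => h.1 rfl⟩

/-- The parking label of the cover `x ⋖ y` is `p`: `y` merges blocks `B₁, B₂` of `x` with
`min B₁ < min B₂`, and `p = max { j ∈ B₁ : j ≤ i for all i ∈ B₂ }`. -/
def ParkingLabelIs {n : ℕ} (x y : Setoid (Fin n)) (p : Fin n) : Prop :=
  ∃ B₁ B₂ : Set (Fin n), IsBlock x B₁ ∧ IsBlock x B₂ ∧ B₁ ≠ B₂ ∧
    IsBlock y (B₁ ∪ B₂) ∧
    (∃ a ∈ B₁, ∀ b ∈ B₂, a < b) ∧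
    p ∈ B₁ ∧ (∀ i ∈ B₂, p ≤ i) ∧ (∀ j ∈ B₁, (∀ i ∈ B₂, j ≤ i) → j ≤ p)

/-- The label of the cover `w ⋖ z` in the `S_n` EL-labeling of `PE_n` coming from the
left-modular chain: `λ(w,z) = min { i-1 : x_i ≰ w and x_i ≤ z }`. -/
def LabelIs (n : ℕ) (w z : Setoid (Fin n)) (v : ℕ) : Prop :=
  ∃ i : ℕ, 1 ≤ i ∧ i ≤ n ∧ i - 1 = v ∧ (¬ xChain n i ≤ w ∧ xChain n i ≤ z) ∧
    ∀ j : ℕ, 1 ≤ j → j ≤ n → (¬ xChain n j ≤ w ∧ xChain n j ≤ z) → i ≤ j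

/-- The sequence of edge labels along a (saturated) chain, recorded as a list. -/
def chainLabels {α Λ : Type*} (lab : α → α → Λ) (c : List α) : List Λ :=
  List.zipWith lab c c.tail

/-- `c` is a saturated chain from `a` to `b` with respect to the cover relation `cov`. -/
def IsSatChainList {α : Type*} (cov : α → α → Prop) (a b : α) (c : List α) : Prop :=
  c.head? = some a ∧ c.getLast? = some b ∧ c.Chain' cov

/-- A chain is rising if its label sequence is strictly increasing. -/
def RisingChain {α Λ : Type*} [LT Λ] (lab : α → α → Λ) (c : List α) : Prop :=
  (chainLabels lab c).Chain' (· < ·)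

/-- `lab` is an EL-labeling with respect to the cover relation `cov` and order `le`:
every interval has a unique rising maximal chain, which is lexicographically least. -/
def IsELLabeling {α Λ : Type*} [PartialOrder Λ] (cov : α → α → Prop) (le : α → α → Prop)
    (lab : α → α → Λ) : Prop :=
  ∀ a b, le a b → ∃ c : List α, IsSatChainList cov a b c ∧ RisingChain lab c ∧
    (∀ c', IsSatChainList cov a b c' → RisingChain lab c' → c' = c) ∧
    (∀ c', IsSatChainList cov a b c' → c' ≠ c →
      List.Lex (· < ·) (chainLabels lab c) (chainLabels lab c'))

/-!
The `NC_n` meet `x_i ⊓ y` and join `joinNC x_i y` are the greatest lower and least upper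
bounds among all noncrossing partitions, so it suffices that they lie in `PE_n`. For
`i ≤ 1` and `n ≤ i` the element `x_i` is `⊥` resp. `⊤`, and both operations return `y`.
Otherwise `n - 1` is a singleton of `x_i` (`i < n`), hence of the meet, and `x_i` joins `1`
with `n` (`2 ≤ i`), hence so does the join; either property rules out both configurations
excluded from `PE_n`.
-/

variable {n : ℕ}

lemma IsBlock.mem_iff_rel {x : Setoid (Fin n)} {B : Set (Fin n)} (hB : IsBlock x B)
    {a b : Fin n} (ha : a ∈ B) : b ∈ B ↔ x.r a b := by
  obtain ⟨c, rfl⟩ := hB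
  exact ⟨fun hb => x.trans' (x.symm' ha) hb, fun hab => x.trans' ha hab⟩

lemma eq_of_blockSetoid_rel_of_notMem {S : Set (Fin n)} {a b : Fin n} (ha : a ∉ S)
    (h : (blockSetoid S).r a b) : a = b :=
  h.resolve_right fun h => ha h.1

lemma blockSetoid_eq_bot {S : Set (Fin n)} (hS : S.Subsingleton) : blockSetoid S = ⊥ :=
  le_bot_iff.mp fun _ _ h => h.elim id fun ⟨ha, hb⟩ => hS ha hb

lemma blockSetoid_univ : blockSetoid (Set.univ : Set (Fin n)) = ⊤ :=
  Setoid.eq_top_iff.mpr fun _ _ => Or.inr ⟨trivial, trivial⟩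

lemma isNoncrossing_blockSetoid (S : Set (Fin n)) : IsNoncrossing (blockSetoid S) := by
  intro i j k l hij hjk hkl hik hjl
  rcases hik with rfl | ⟨hi, -⟩
  · exact absurd (hij.trans hjk) (lt_irrefl _)
  rcases hjl with rfl | ⟨hj, -⟩
  · exact absurd (hjk.trans hkl) (lt_irrefl _)
  exact Or.inr ⟨hi, hj⟩

lemma IsNoncrossing.inf {x y : Setoid (Fin n)} (hx : IsNoncrossing x) (hy : IsNoncrossing y) :
    IsNoncrossing (x ⊓ y) := fun i j k l hij hjk hkl hik hjl =>
  ⟨hx i j k l hij hjk hkl hik.1 hjl.1, hy i j k l hij hjk hkl hik.2 hjl.2⟩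

lemma isNoncrossing_ncClosure (x : Setoid (Fin n)) : IsNoncrossing (ncClosure x) :=
  fun i j k l hij hjk hkl hik hjl z hz => hz.1 i j k l hij hjk hkl (hik z hz) (hjl z hz)

lemma le_ncClosure (x : Setoid (Fin n)) : x ≤ ncClosure x :=
  le_sInf fun _ hz => hz.2

lemma ncClosure_le {x z : Setoid (Fin n)} (hz : IsNoncrossing z) (hxz : x ≤ z) :
    ncClosure x ≤ z :=
  sInf_le ⟨hz, hxz⟩

lemma le_joinNC_left (x y : Setoid (Fin n)) : x ≤ joinNC x y :=
  le_sup_left.trans (le_ncClosure _)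

lemma le_joinNC_right (x y : Setoid (Fin n)) : y ≤ joinNC x y :=
  le_sup_right.trans (le_ncClosure _)

lemma joinNC_bot_left {y : Setoid (Fin n)} (hy : IsNoncrossing y) : joinNC ⊥ y = y :=
  le_antisymm (ncClosure_le hy (by rw [bot_sup_eq])) (le_joinNC_right ⊥ y)

lemma isMeetPE_inf {x y : Setoid (Fin n)} (h : PEmem (x ⊓ y)) : IsMeetPE x y (x ⊓ y) :=
  ⟨h, inf_le_left, inf_le_right, fun _ _ => le_inf⟩

lemma isJoinPE_joinNC {x y : Setoid (Fin n)} (h : PEmem (joinNC x y)) :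
    IsJoinPE x y (joinNC x y) :=
  ⟨h, le_joinNC_left x y, le_joinNC_right x y, fun _ hz hxz hyz =>
    ncClosure_le hz.1 (sup_le hxz hyz)⟩

lemma PEmem.of_penultimate_isolated (hn : 3 ≤ n) {z : Setoid (Fin n)} (hz : IsNoncrossing z)
    (hiso : ∀ a b : Fin n, a.val = n - 2 → z.r a b → a = b) : PEmem z := by
  refine ⟨hz, fun hB => ?_, ?_⟩
  · have hlast := (hB.mem_iff_rel (a := ⟨n - 2, by omega⟩) (b := ⟨n - 1, by omega⟩)
      (Or.inl rfl)).mp (Or.inr rfl)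
    exact absurd (congrArg Fin.val (hiso _ _ rfl hlast)) (by simp only; omega)
  · rintro ⟨-, a, b, ha, hb, hab⟩
    exact absurd (congrArg Fin.val (hiso b a hb (z.symm' hab))) (by omega)

lemma PEmem.of_first_rel_last (hn : 3 ≤ n) {z : Setoid (Fin n)} (hz : IsNoncrossing z)
    {a b : Fin n} (ha : a.val = 0) (hb : b.val = n - 1) (hab : z.r a b) : PEmem z := by
  have first_mem {B : Set (Fin n)} (hB : IsBlock z B) (hbB : b ∈ B) : a ∈ B :=
    (hB.mem_iff_rel hbB).mpr (z.symm' hab)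
  refine ⟨hz, fun hB => ?_, fun h => ?_⟩
  · rcases first_mem hB (Or.inr hb) with h | h <;> omega
  · exact absurd (first_mem h.1 hb) (by simp only [Set.mem_ofPred_eq]; omega)

lemma xChain_eq_bot {i : ℕ} (hi : i ≤ 1) : xChain n i = ⊥ :=
  blockSetoid_eq_bot fun a ha b hb => Fin.ext (by simp only [Set.mem_ofPred_eq] at ha hb; omega)

lemma xChain_eq_top {i : ℕ} (hi : n ≤ i) : xChain n i = ⊤ := by
  rw [xChain, ← blockSetoid_univ]
  congr 1
  exact Set.eq_univ_of_forall fun a => by simp only [Set.mem_ofPred_eq]; omega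

lemma PEmem.xChain_inf (hn : 3 ≤ n) (i : ℕ) {y : Setoid (Fin n)} (hy : PEmem y) :
    PEmem (xChain n i ⊓ y) := by
  rcases le_or_gt n i with hi | hi
  · rwa [xChain_eq_top hi, top_inf_eq]
  · refine .of_penultimate_isolated hn ((isNoncrossing_blockSetoid _).inf hy.1)
      fun a b ha hab => eq_of_blockSetoid_rel_of_notMem ?_ hab.1
    simp only [Set.mem_ofPred_eq]
    omega

lemma PEmem.joinNC_xChain (hn : 3 ≤ n) (i : ℕ) {y : Setoid (Fin n)} (hy : PEmem y) :
    PEmem (joinNC (xChain n i) y) := by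
  rcases le_or_gt i 1 with hi | hi
  · rwa [xChain_eq_bot hi, joinNC_bot_left hy.1]
  · have hrel : (xChain n i).r ⟨0, by omega⟩ ⟨n - 1, by omega⟩ :=
      Or.inr ⟨Or.inl hi, Or.inr rfl⟩
    exact .of_first_rel_last hn (isNoncrossing_ncClosure _) rfl rfl (le_joinNC_left _ y hrel)

theorem PE_meet_join_xChain_general (n : ℕ) (hn : 3 ≤ n) (i : ℕ)
    (y : Setoid (Fin n)) (hy : PEmem y) :
    IsMeetPE (xChain n i) y (xChain n i ⊓ y) ∧
    IsJoinPE (xChain n i) y (joinNC (xChain n i) y) :=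
  ⟨isMeetPE_inf (.xChain_inf hn i hy), isJoinPE_joinNC (.joinNC_xChain hn i hy)⟩

/-- For `i ∈ [n]` and `y ∈ PE_n`, the meet and join of `x_i` and `y` in
`PE_n` agree with those computed in `NC_n`: the `NC_n`-meet `x_i ⊓ y` is the meet of
`x_i` and `y` in `PE_n`, and the `NC_n`-join `joinNC x_i y` is their join in `PE_n`. -/
theorem PE_meet_join_xChain (n : ℕ) (hn : 3 ≤ n) (i : ℕ) (h1 : 1 ≤ i) (h2 : i ≤ n)
    (y : Setoid (Fin n)) (hy : PEmem y) :
    IsMeetPE (xChain n i) y (xChain n i ⊓ y) ∧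
    IsJoinPE (xChain n i) y (joinNC (xChain n i) y) :=
  PE_meet_join_xChain_general n hn i y hy
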